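/- Let H(n,ρ) be the random 3-uniform hypergraph on vertex set [n] where each 3-element subset is an edge independently with probability ρ ≤ 48c/n² for a constant c. Let K > 0 be a constant. Then the expected number of vertex subsets of size k, 4 ≤ k ≤ K log n, spanning at least ⌈3k/5⌉ edges, summed over all such k, tends to 0 as n → ∞, provided c is sufficiently small. Consequently, a.a.s. no set of k vertices with 4 ≤ k ≤ K log n spans ⌈3k/5⌉ or more edges. -/

import Mathlib

/-!
A fixed `k`-set spans at least `m` edges only if some `m` of its `C(k,3)` triples are all edges,
so by the union bound this has probability at most `C(C(k,3), m) ρ^m ≤ (k^3)^m ρ^m`. Summing over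
the `C(n,k) ≤ n^k` sets, with `m = ⌈3k/5⌉` and `ρ ≤ 48c/n²`, the expected number of such `k`-sets
is at most `(48c k^3)^m n^(k-2m) ≤ ((1 + 48c k^3) n^(-1/5))^k`, because `5m ≥ 3k`. For
`k ≤ K log n` the base `B_n = (1 + 48c (K log n)^3) n^(-1/5)` is polylogarithmic over `n^(1/5)`,
so it tends to `0`, and the sum over `k ≥ 4` is at most `B_n^4 / (1 - B_n) → 0`. The second claim
follows from the first by the union bound over all `k` and `S`.
-/

open MeasureTheory Filter

/-- The random 3-uniform hypergraph `H(n,ρ)`: each 3-element subset of `Fin n` is an edge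
independently with probability `ρ`; a sample point records for each such subset whether it is
an edge. -/
noncomputable def hypMeasure (n : ℕ) (ρ : ENNReal) (hρ : ρ ≤ 1) :
    Measure ({T : Finset (Fin n) // T.card = 3} → Bool) :=
  Measure.pi fun _ => (PMF.bernoulli ρ.toNNReal (by simpa using ENNReal.toNNReal_mono ENNReal.one_ne_top hρ)).toMeasure

/-- The number of edges of the hypergraph `ω` spanned by the vertex set `S`. -/
def spanCount {n : ℕ} (S : Finset (Fin n)) (ω : {T : Finset (Fin n) // T.card = 3} → Bool) : ℕ :=
  (Finset.univ.filter fun T : {T : Finset (Fin n) // T.card = 3} => T.1 ⊆ S ∧ ω T = true).card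

open Finset

section Bernoulli

variable {ι : Type*} [Fintype ι] (p : NNReal) (hp : p ≤ 1)

theorem pi_bernoulli_forall_true (E : Finset ι) :
    Measure.pi (fun _ : ι => (PMF.bernoulli p hp).toMeasure) {ω | ∀ i ∈ E, ω i = true}
      = (p : ENNReal) ^ #E := by
  classical
  have hcyl : {ω : ι → Bool | ∀ i ∈ E, ω i = true}
      = Set.univ.pi fun i => if i ∈ E then {true} else Set.univ := by
    ext ω
    simp only [Set.mem_ofPred_eq, Set.mem_pi, Set.mem_univ, true_implies]
    refine forall_congr' fun i => ?_
    split_ifs <;> simp_all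
  have hfactor (i : ι) : (PMF.bernoulli p hp).toMeasure (if i ∈ E then {true} else Set.univ)
      = if i ∈ E then (p : ENNReal) else 1 := by
    split_ifs
    · simp [PMF.bernoulli]
    · exact measure_univ
  rw [hcyl, Measure.pi_pi]
  simp_rw [hfactor]
  rw [prod_ite_mem, univ_inter, prod_const]

theorem pi_bernoulli_card_filter_true_ge (s : Finset ι) (m : ℕ) :
    Measure.pi (fun _ : ι => (PMF.bernoulli p hp).toMeasure) {ω | m ≤ #{i ∈ s | ω i = true}}
      ≤ ((#s).choose m : ENNReal) * (p : ENNReal) ^ m := by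
  -- at least `m` successes in `s` means some `m`-subset of `s` consists of successes
  have hcover : {ω : ι → Bool | m ≤ #{i ∈ s | ω i = true}}
      ⊆ ⋃ E ∈ s.powersetCard m, {ω | ∀ i ∈ E, ω i = true} := by
    intro ω hω
    obtain ⟨E, hEs, hEm⟩ := exists_subset_card_eq hω
    exact Set.mem_biUnion (mem_powersetCard.mpr ⟨hEs.trans (filter_subset _ _), hEm⟩)
      fun i hi => (mem_filter.mp (hEs hi)).2
  calc _ ≤ ∑ E ∈ s.powersetCard m,
        Measure.pi (fun _ : ι => (PMF.bernoulli p hp).toMeasure) {ω | ∀ i ∈ E, ω i = true} :=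
        (measure_mono hcover).trans (measure_biUnion_finset_le _ _)
    _ = ∑ _E ∈ s.powersetCard m, (p : ENNReal) ^ m :=
        sum_congr rfl fun E hE => by
          rw [pi_bernoulli_forall_true, (mem_powersetCard.mp hE).2]
    _ = _ := by rw [sum_const, card_powersetCard, nsmul_eq_mul]

end Bernoulli

instance hypMeasure.instIsProbabilityMeasure (n : ℕ) (ρ : ENNReal) (hρ : ρ ≤ 1) :
    IsProbabilityMeasure (hypMeasure n ρ hρ) := by
  unfold hypMeasure; infer_instance

theorem card_triples_subset {n : ℕ} (S : Finset (Fin n)) :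
    #{T : {T : Finset (Fin n) // T.card = 3} | T.1 ⊆ S} = (#S).choose 3 := by
  rw [← card_powersetCard 3 S, ← card_map (Function.Embedding.subtype _)]
  congr 1
  ext T
  simp [mem_powersetCard, and_comm]

theorem hypMeasure_spanCount_ge_le {n : ℕ} (ρ : ENNReal) (hρ : ρ ≤ 1) (S : Finset (Fin n))
    (m : ℕ) :
    hypMeasure n ρ hρ {ω | m ≤ spanCount S ω} ≤ (((#S).choose 3).choose m : ENNReal) * ρ ^ m := by
  have hρtop : ρ ≠ ⊤ := ne_top_of_le_ne_top ENNReal.one_ne_top hρ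
  have hspan (ω) : spanCount S ω = #{T ∈ {T : {T : Finset (Fin n) // T.card = 3} | T.1 ⊆ S} |
      ω T = true} := by
    rw [spanCount, filter_filter]
  simp_rw [hspan]
  have := pi_bernoulli_card_filter_true_ge ρ.toNNReal
    (by simpa using ENNReal.toNNReal_mono ENNReal.one_ne_top hρ)
    {T : {T : Finset (Fin n) // T.card = 3} | T.1 ⊆ S} m
  rwa [card_triples_subset, ENNReal.coe_toNNReal hρtop] at this

theorem sum_measureReal_spanCount_ge_le (n k m : ℕ) (ρ : ENNReal) (hρ : ρ ≤ 1) :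
    ∑ S ∈ (univ : Finset (Finset (Fin n))).filter (fun S => S.card = k),
        (hypMeasure n ρ hρ {ω | m ≤ spanCount S ω}).toReal
      ≤ (n : ℝ) ^ k * ((k : ℝ) ^ 3) ^ m * ρ.toReal ^ m := by
  have hρtop : ρ ≠ ⊤ := ne_top_of_le_ne_top ENNReal.one_ne_top hρ
  have hterm : ∀ S ∈ (univ : Finset (Finset (Fin n))).filter (fun S => S.card = k),
      (hypMeasure n ρ hρ {ω | m ≤ spanCount S ω}).toReal
        ≤ ((k.choose 3).choose m) * ρ.toReal ^ m := by
    intro S hS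
    rw [(mem_filter.mp hS).2.symm]
    simpa using ENNReal.toReal_mono (by simp [ENNReal.mul_eq_top, hρtop])
      (hypMeasure_spanCount_ge_le ρ hρ S m)
  have hcount : #((univ : Finset (Finset (Fin n))).filter (fun S => S.card = k)) = n.choose k := by
    rw [← powerset_univ, ← powersetCard_eq_filter, card_powersetCard, card_univ, Fintype.card_fin]
  have hchoose : ((k.choose 3).choose m : ℝ) ≤ ((k : ℝ) ^ 3) ^ m := by
    exact_mod_cast (Nat.choose_le_pow _ m).trans (Nat.pow_le_pow_left (Nat.choose_le_pow k 3) m)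
  calc _ ≤ (n.choose k : ℝ) * (((k.choose 3).choose m) * ρ.toReal ^ m) := by
        simpa [hcount] using sum_le_card_nsmul _ _ _ hterm
    _ ≤ (n : ℝ) ^ k * (((k : ℝ) ^ 3) ^ m * ρ.toReal ^ m) := by
        gcongr
        exact_mod_cast Nat.choose_le_pow n k
    _ = _ := by ring

theorem pow_mul_pow_mul_div_sq_pow_le {x a X : ℝ} {k m : ℕ} (hx : 1 ≤ x) (ha : 0 ≤ a)
    (hkX : (k : ℝ) ≤ X) (hmk : m ≤ k) (hkm : 3 * k ≤ 5 * m) :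
    x ^ k * ((k : ℝ) ^ 3) ^ m * (a / x ^ 2) ^ m ≤ ((1 + a * X ^ 3) * x ^ (-(1 : ℝ) / 5)) ^ k := by
  have hx0 : 0 < x := by linarith
  have hpoly : (a * (k : ℝ) ^ 3) ^ m ≤ (1 + a * X ^ 3) ^ k := calc
    _ ≤ (1 + a * X ^ 3) ^ m := by
        gcongr
        linarith [mul_le_mul_of_nonneg_left (pow_le_pow_left₀ k.cast_nonneg hkX 3) ha]
    _ ≤ _ := pow_le_pow_right₀
        (by linarith [mul_nonneg ha (pow_nonneg (k.cast_nonneg.trans hkX) 3)]) hmk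
  have hpow : x ^ k / x ^ (2 * m) ≤ (x ^ (-(1 : ℝ) / 5)) ^ k := by
    rw [← Real.rpow_natCast, ← Real.rpow_natCast, ← Real.rpow_sub hx0, ← Real.rpow_natCast,
      ← Real.rpow_mul hx0.le]
    apply Real.rpow_le_rpow_of_exponent_le hx
    have : (3 : ℝ) * k ≤ 5 * m := by exact_mod_cast hkm
    push_cast
    linarith
  calc _ = (a * (k : ℝ) ^ 3) ^ m * (x ^ k / x ^ (2 * m)) := by
        rw [div_pow, pow_mul]; field_simp; ring
    _ ≤ _ := by
        rw [mul_pow (1 + a * X ^ 3)]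
        exact mul_le_mul hpoly hpow (by positivity)
          ((pow_nonneg (mul_nonneg ha (by positivity)) m).trans hpoly)

theorem sum_sum_measureReal_spanCount_ge_le {n : ℕ} (hn : 1 ≤ n) {ρ : ENNReal} (hρ : ρ ≤ 1)
    {a X : ℝ} (ha : 0 ≤ a) (hρa : ρ.toReal ≤ a / (n : ℝ) ^ 2) (s : Finset ℕ)
    (hsX : ∀ k ∈ s, (k : ℝ) ≤ X) :
    ∑ k ∈ s, ∑ S ∈ (univ : Finset (Finset (Fin n))).filter (fun S => S.card = k),
        (hypMeasure n ρ hρ {ω | (3 * k + 4) / 5 ≤ spanCount S ω}).toReal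
      ≤ ∑ k ∈ s, ((1 + a * X ^ 3) * (n : ℝ) ^ (-(1 : ℝ) / 5)) ^ k := by
  refine sum_le_sum fun k hk => ?_
  set m := (3 * k + 4) / 5
  calc _ ≤ (n : ℝ) ^ k * ((k : ℝ) ^ 3) ^ m * ρ.toReal ^ m :=
        sum_measureReal_spanCount_ge_le n k m ρ hρ
    _ ≤ (n : ℝ) ^ k * ((k : ℝ) ^ 3) ^ m * (a / (n : ℝ) ^ 2) ^ m := by gcongr
    _ ≤ _ := pow_mul_pow_mul_div_sq_pow_le (by exact_mod_cast hn) ha (hsX k hk) (by omega)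
        (by omega)

theorem tendsto_log_pow_mul_rpow_neg_atTop (p : ℕ) {s : ℝ} (hs : 0 < s) :
    Tendsto (fun x : ℝ => Real.log x ^ p * x ^ (-s)) atTop (nhds 0) := by
  refine (isLittleO_log_rpow_rpow_atTop p hs).tendsto_div_nhds_zero.congr' ?_
  filter_upwards [eventually_ge_atTop 0] with x hx
  rw [Real.rpow_natCast, Real.rpow_neg hx, div_eq_mul_inv]

theorem tendsto_sum_sum_measureReal_spanCount_ge {a K : ℝ} (ha : 0 ≤ a) (hK : 0 ≤ K)
    (ρ : ℕ → ENNReal) (hρ : ∀ n, ρ n ≤ 1) (hρa : ∀ n, (ρ n).toReal ≤ a / (n : ℝ) ^ 2) :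
    Tendsto (fun n : ℕ => ∑ k ∈ Icc 4 ⌊K * Real.log n⌋₊,
        ∑ S ∈ (univ : Finset (Finset (Fin n))).filter (fun S => S.card = k),
          (hypMeasure n (ρ n) (hρ n) {ω | (3 * k + 4) / 5 ≤ spanCount S ω}).toReal)
      atTop (nhds 0) := by
  set B : ℕ → ℝ := fun n => (1 + a * (K * Real.log n) ^ 3) * (n : ℝ) ^ (-(1 : ℝ) / 5)
  have hB : Tendsto B atTop (nhds 0) := by
    have := ((tendsto_log_pow_mul_rpow_neg_atTop 0 (s := 1 / 5) (by norm_num)).add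
      ((tendsto_log_pow_mul_rpow_neg_atTop 3 (s := 1 / 5) (by norm_num)).const_mul
        (a * K ^ 3))).comp tendsto_natCast_atTop_atTop
    rw [mul_zero, add_zero] at this
    convert this using 1
    funext n
    simp only [B, Function.comp_apply, pow_zero, one_mul, neg_div]
    ring
  have hbound : ∀ᶠ n : ℕ in atTop, ∑ k ∈ Icc 4 ⌊K * Real.log n⌋₊,
        ∑ S ∈ (univ : Finset (Finset (Fin n))).filter (fun S => S.card = k),
          (hypMeasure n (ρ n) (hρ n) {ω | (3 * k + 4) / 5 ≤ spanCount S ω}).toReal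
      ≤ B n ^ 4 / (1 - B n) := by
    filter_upwards [eventually_ge_atTop 1, hB.eventually (gt_mem_nhds one_pos)] with n hn hB1
    have hlog : 0 ≤ Real.log n := Real.log_nonneg (by exact_mod_cast hn)
    calc _ ≤ ∑ k ∈ Icc 4 ⌊K * Real.log n⌋₊, B n ^ k :=
          sum_sum_measureReal_spanCount_ge_le hn (hρ n) ha (hρa n) _
            fun k hk => (Nat.cast_le.mpr (mem_Icc.mp hk).2).trans (Nat.floor_le (by positivity))
      _ ≤ _ := by
          rw [← Ico_add_one_right_eq_Icc]
          exact geom_sum_Ico_le_of_lt_one (by positivity) hB1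
  refine squeeze_zero' (Eventually.of_forall fun n => ?_) hbound ?_
  · exact sum_nonneg fun _ _ => sum_nonneg fun _ _ => ENNReal.toReal_nonneg
  · have hlim : Tendsto (fun n => B n ^ 4 / (1 - B n)) atTop (nhds (0 ^ 4 / (1 - 0))) :=
      (hB.pow 4).div (tendsto_const_nhds.sub hB) (by norm_num)
    rwa [zero_pow four_ne_zero, zero_div] at hlim

theorem measureReal_exists_le_sum {Ω α : Type*} [MeasurableSpace Ω] [Fintype α] (μ : Measure Ω)
    [IsFiniteMeasure μ] (s : Finset ℕ) (P : ℕ → Finset α → Ω → Prop) :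
    (μ {ω | ∃ k ∈ s, ∃ S : Finset α, S.card = k ∧ P k S ω}).toReal
      ≤ ∑ k ∈ s, ∑ S ∈ (univ : Finset (Finset α)).filter (fun S => S.card = k),
          (μ {ω | P k S ω}).toReal := by
  simp only [← measureReal_def]
  calc _ ≤ μ.real (⋃ k ∈ s, ⋃ S ∈ (univ : Finset (Finset α)).filter (fun S => S.card = k),
          {ω | P k S ω}) := by
        refine measureReal_mono ?_ (measure_ne_top μ _)
        rintro ω ⟨k, hk, S, hS, hP⟩
        exact Set.mem_biUnion hk (Set.mem_biUnion (by simpa using hS) hP)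
    _ ≤ _ := (measureReal_biUnion_finset_le _ _).trans
        (sum_le_sum fun _ _ => measureReal_biUnion_finset_le _ _)

/-- Consider `H(n,ρ)` with `ρ = 48c/n²`.  For sufficiently small `c > 0` and
any constant `K > 0`, the expected number of vertex subsets of size `k`, `4 ≤ k ≤ K log n`,
spanning at least `⌈3k/5⌉` edges (summed over all such `k`) tends to `0` as `n → ∞`;
consequently a.a.s. no set of `k` vertices with `4 ≤ k ≤ K log n` spans `⌈3k/5⌉` or more edges.
(Here `(3k+4)/5` is natural-number division, which equals `⌈3k/5⌉`.) -/
theorem stmt_13 : ∃ c₀ : ℝ, 0 < c₀ ∧ ∀ c : ℝ, 0 < c → c ≤ c₀ → ∀ K : ℝ, 0 < K →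
    (Tendsto (fun n : ℕ =>
      ∑ k ∈ Finset.Icc 4 ⌊K * Real.log n⌋₊,
        ∑ S ∈ (Finset.univ : Finset (Finset (Fin n))).filter (fun S => S.card = k),
          ((hypMeasure n (min (ENNReal.ofReal (48 * c / (n : ℝ) ^ 2)) 1) (min_le_right _ _))
            {ω | (3 * k + 4) / 5 ≤ spanCount S ω}).toReal)
      atTop (nhds 0)) ∧
    (Tendsto (fun n : ℕ =>
      ((hypMeasure n (min (ENNReal.ofReal (48 * c / (n : ℝ) ^ 2)) 1) (min_le_right _ _))
        {ω | ∃ k ∈ Finset.Icc 4 ⌊K * Real.log n⌋₊, ∃ S : Finset (Fin n),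
          S.card = k ∧ (3 * k + 4) / 5 ≤ spanCount S ω}).toReal)
      atTop (nhds 0)) := by
  refine ⟨1, one_pos, fun c hc _ K hK => ?_⟩
  have hρ (n : ℕ) : (min (ENNReal.ofReal (48 * c / (n : ℝ) ^ 2)) 1).toReal ≤ 48 * c / (n : ℝ) ^ 2 :=
    (ENNReal.toReal_mono ENNReal.ofReal_ne_top (min_le_left _ _)).trans_eq
      (ENNReal.toReal_ofReal (by positivity))
  have hexpected := tendsto_sum_sum_measureReal_spanCount_ge (by positivity) hK.le _
    (fun _ => min_le_right _ _) hρ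
  exact ⟨hexpected, squeeze_zero (fun _ => ENNReal.toReal_nonneg)
    (fun n => measureReal_exists_le_sum _ _ _) hexpected⟩
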